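/- arXiv:2203.01438 — 2 statements merged into one kernel-verified Lean document; each statement's English description precedes it below -/
import Mathlib

section
/- Let Q be a partial assignment with |dom Q| = τ, let s and ℓ be two distinct features not in dom Q, let v : Fin (m s) and w : Fin (m ℓ), and let Q' be Q updated so that Q' s = some v, Q' ℓ = some w, and Q' i = Q i for all other i. Then for every sample a, ⟨enc a, mask Q'⟩ = τ + 2 if and only if a is consistent with Q, a s = v, and a ℓ = w. (This is the paper's criterion that a training sample matches a query-matrix column exactly when the corresponding entry of the result matrix equals τ_p + 2.) -/
/-- One-hot encoding of a sample `a`. -/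
def enc {d : ℕ} {m : Fin d → ℕ} (a : (i : Fin d) → Fin (m i)) :
    (Σ i : Fin d, Fin (m i)) → ℕ :=
  fun p => if a p.1 = p.2 then 1 else 0

/-- Mask of a partial assignment `Q`. -/
def mask {d : ℕ} {m : Fin d → ℕ} (Q : (i : Fin d) → Option (Fin (m i))) :
    (Σ i : Fin d, Fin (m i)) → ℕ :=
  fun p => if Q p.1 = some p.2 then 1 else 0

/-- Domain of a partial assignment. -/
def dom {d : ℕ} {m : Fin d → ℕ} (Q : (i : Fin d) → Option (Fin (m i))) : Finset (Fin d) :=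
  Finset.univ.filter fun i => Q i ≠ none

/-- Inner product of two vectors indexed by feature/value pairs. -/
def ip {d : ℕ} {m : Fin d → ℕ} (u v : (Σ i : Fin d, Fin (m i)) → ℕ) : ℕ :=
  ∑ p : Σ i : Fin d, Fin (m i), u p * v p

/-- A sample `a` is consistent with a partial assignment `Q`. -/
def Consistent {d : ℕ} {m : Fin d → ℕ} (a : (i : Fin d) → Fin (m i))
    (Q : (i : Fin d) → Option (Fin (m i))) : Prop :=
  ∀ (i : Fin d) (j : Fin (m i)), Q i = some j → a i = j

instance {d : ℕ} {m : Fin d → ℕ} (a : (i : Fin d) → Fin (m i))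
    (Q : (i : Fin d) → Option (Fin (m i))) : Decidable (Consistent a Q) :=
  inferInstanceAs (Decidable (∀ (i : Fin d) (j : Fin (m i)), Q i = some j → a i = j))

lemma ip_enc_mask {d : ℕ} {m : Fin d → ℕ} (a : (i : Fin d) → Fin (m i))
    (Q : (i : Fin d) → Option (Fin (m i))) :
    ip (enc a) (mask Q) = (Finset.univ.filter fun i => Q i = some (a i)).card := by
  rw [ip, Finset.card_filter, ← Finset.univ_sigma_univ, Finset.sum_sigma]
  refine Finset.sum_congr rfl fun i _ => ?_
  cases hq : Q i with
  | none => simp [enc, mask, hq]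
  | some y => simp [enc, mask, hq, Finset.sum_ite_eq, eq_comm]

theorem stmt_5 (d : ℕ) (hd : 1 ≤ d) (m : Fin d → ℕ) (hm : ∀ i, 1 ≤ m i)
    (Q : (i : Fin d) → Option (Fin (m i))) (τ : ℕ) (hτ : (dom Q).card = τ)
    (s ℓ : Fin d) (hsl : s ≠ ℓ) (hs : s ∉ dom Q) (hℓ : ℓ ∉ dom Q)
    (v : Fin (m s)) (w : Fin (m ℓ))
    (Q' : (i : Fin d) → Option (Fin (m i)))
    (hQ' : Q' = Function.update (Function.update Q s (some v)) ℓ (some w))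
    (a : (i : Fin d) → Fin (m i)) :
    ip (enc a) (mask Q') = τ + 2 ↔ (Consistent a Q ∧ a s = v ∧ a ℓ = w) := by
  have hQs : Q' s = some v := by
    rw [hQ', Function.update_of_ne hsl, Function.update_self]
  have hQl : Q' ℓ = some w := by
    rw [hQ', Function.update_self]
  have hQi : ∀ i, i ≠ s → i ≠ ℓ → Q' i = Q i := by
    intro i h1 h2
    rw [hQ', Function.update_of_ne h2, Function.update_of_ne h1]
  have hdom : dom Q' = insert s (insert ℓ (dom Q)) := by
    ext i
    simp only [dom, Finset.mem_filter, Finset.mem_univ, true_and, Finset.mem_insert]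
    by_cases h1 : i = s
    · subst h1; simp [hQs]
    · by_cases h2 : i = ℓ
      · subst h2; simp [hQl]
      · simp [hQi i h1 h2, h1, h2]
  have hcard : (dom Q').card = τ + 2 := by
    rw [hdom, Finset.card_insert_of_notMem, Finset.card_insert_of_notMem hℓ, hτ]
    simp [hsl, hs]
  set S := Finset.univ.filter fun i => Q' i = some (a i) with hS
  have hsub : S ⊆ dom Q' := by
    intro i hi
    simp only [hS, Finset.mem_filter] at hi
    simp [dom, hi.2]
  rw [ip_enc_mask, ← hS, ← hcard]
  constructor
  · intro h
    have heq : S = dom Q' := Finset.eq_of_subset_of_card_le hsub (le_of_eq h.symm)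
    have hall : ∀ i ∈ dom Q', Q' i = some (a i) := by
      intro i hi
      rw [← heq] at hi
      exact (Finset.mem_filter.mp hi).2
    have has : a s = v := by
      have := hall s (by simp [hdom])
      rw [hQs] at this; exact (Option.some_injective _ this).symm
    have hal : a ℓ = w := by
      have := hall ℓ (by simp [hdom])
      rw [hQl] at this; exact (Option.some_injective _ this).symm
    refine ⟨fun i j hij => ?_, has, hal⟩
    have h1 : i ≠ s := fun h => hs (h ▸ (by simp [dom, hij] : i ∈ dom Q))
    have h2 : i ≠ ℓ := fun h => hℓ (h ▸ (by simp [dom, hij] : i ∈ dom Q))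
    have hi : i ∈ dom Q' := by simp [hdom, dom, hQi i h1 h2, hij]
    have := hall i hi
    rw [hQi i h1 h2, hij] at this
    exact (Option.some_injective _ this).symm
  · rintro ⟨hc, has, hal⟩
    congr 1
    apply Finset.Subset.antisymm hsub
    intro i hi
    simp only [hS, Finset.mem_filter, Finset.mem_univ, true_and]
    rw [hdom, Finset.mem_insert, Finset.mem_insert] at hi
    rcases hi with h1 | h2 | h3
    · subst h1; rw [hQs, has]
    · subst h2; rw [hQl, hal]
    · simp only [dom, Finset.mem_filter] at h3
      have h1 : i ≠ s := fun h => hs (h ▸ (by simp [dom, h3.2] : i ∈ dom Q))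
      have h2 : i ≠ ℓ := fun h => hℓ (h ▸ (by simp [dom, h3.2] : i ∈ dom Q))
      rw [hQi i h1 h2]
      rcases Option.ne_none_iff_exists'.mp h3.2 with ⟨j, hj⟩
      rw [hj, hc i j hj]
end

section
/- (Correctness of matrix-based inference.) Let t be a non-repeating decision tree over (d, m), let ℓ be a leaf of t with path partial assignment Q_ℓ and τ_ℓ = |dom Q_ℓ|, and let a be a sample. Then ⟨enc a, mask Q_ℓ⟩ = τ_ℓ if and only if the traversal of t on a reaches ℓ. Consequently, classifying a by selecting the unique model-matrix column whose inner product with enc a equals its number of assigned feature values yields the same leaf as the standard top-down tree traversal. -/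
/-- A decision tree over `(d, m)`: either a leaf, or a node labeled by a feature
`i : Fin d` together with `m i` child trees. -/
inductive DTree (d : ℕ) (m : Fin d → ℕ) : Type where
  | leaf : DTree d m
  | node (i : Fin d) (c : Fin (m i) → DTree d m) : DTree d m

namespace DTree

/-- Addresses of the leaves of a decision tree. -/
inductive LeafAddr {d : ℕ} {m : Fin d → ℕ} : DTree d m → Type where
  | here : LeafAddr .leaf
  | child {i : Fin d} {c : Fin (m i) → DTree d m} (j : Fin (m i)) :
      LeafAddr (c j) → LeafAddr (.node i c)

/-- The path partial assignment of a leaf: for each feature appearing on the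
root-to-leaf path, the child index taken at the node where it appears. -/
def pathQ {d : ℕ} {m : Fin d → ℕ} :
    {t : DTree d m} → t.LeafAddr → ((i : Fin d) → Option (Fin (m i)))
  | .leaf, .here => fun _ => none
  | .node _ c, .child j a => Function.update (pathQ a) _ (some j)

/-- Traversal of a tree on a sample: at a node labeled `i`, descend into the
child indexed by `a i`, until a leaf is reached. -/
def traverse {d : ℕ} {m : Fin d → ℕ} :
    (t : DTree d m) → ((i : Fin d) → Fin (m i)) → t.LeafAddr
  | .leaf, _ => .here
  | .node i c, a => .child (a i) ((c (a i)).traverse a)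

/-- Feature `i'` does not appear as a node label anywhere in the tree. -/
def NotContains {d : ℕ} {m : Fin d → ℕ} : DTree d m → Fin d → Prop
  | .leaf, _ => True
  | .node i c, i' => i ≠ i' ∧ ∀ j, (c j).NotContains i'

/-- No feature appears more than once on any root-to-leaf path. -/
def NonRepeating {d : ℕ} {m : Fin d → ℕ} : DTree d m → Prop
  | .leaf => True
  | .node i c => (∀ j, (c j).NotContains i) ∧ ∀ j, (c j).NonRepeating

end DTree

lemma pathQ_none {d : ℕ} {m : Fin d → ℕ} {t : DTree d m} {i : Fin d}
    (h : t.NotContains i) (ℓ : t.LeafAddr) : DTree.pathQ ℓ i = none := by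
  induction ℓ with
  | here => rfl
  | child j ℓ' ih =>
    obtain ⟨hne, hc⟩ := h
    simp [DTree.pathQ, Function.update, (Ne.symm hne), ih (hc j)]

lemma consistent_iff_traverse {d : ℕ} {m : Fin d → ℕ} {t : DTree d m}
    (ht : t.NonRepeating) (ℓ : t.LeafAddr) (a : (i : Fin d) → Fin (m i)) :
    Consistent a (DTree.pathQ ℓ) ↔ t.traverse a = ℓ := by
  induction ℓ with
  | here => simp [Consistent, DTree.pathQ, DTree.traverse]
  | @child i c j ℓ' ih =>
    obtain ⟨hnc, hnr⟩ := ht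
    constructor
    · intro hcons
      have haij : a i = j := hcons i j (by simp [DTree.pathQ])
      have hcons' : Consistent a (DTree.pathQ ℓ') := by
        intro i' j' hq
        rcases eq_or_ne i i' with rfl | hne
        · rw [pathQ_none (hnc j) ℓ'] at hq; exact absurd hq (by simp)
        · exact hcons i' j' (by simpa [DTree.pathQ, Function.update, Ne.symm hne] using hq)
      have := (ih (hnr j)).1 hcons'
      subst haij
      simp [DTree.traverse, this]
    · intro htr
      simp only [DTree.traverse] at htr
      have haij : a i = j := by
        cases htr; rfl
      subst haij
      cases htr
      have hcons' := (ih (hnr (a i))).2 rfl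
      intro i' j' hq
      rcases eq_or_ne i i' with rfl | hne
      · simp [DTree.pathQ, Function.update] at hq; exact hq
      · exact hcons' i' j' (by simpa [DTree.pathQ, Function.update, Ne.symm hne] using hq)

theorem stmt_10 (d : ℕ) (hd : 1 ≤ d) (m : Fin d → ℕ) (hm : ∀ i, 1 ≤ m i)
    (t : DTree d m) (ht : t.NonRepeating) (ℓ : t.LeafAddr) (τ : ℕ)
    (hτ : (dom (DTree.pathQ ℓ)).card = τ) (a : (i : Fin d) → Fin (m i)) :
    ip (enc a) (mask (DTree.pathQ ℓ)) = τ ↔ t.traverse a = ℓ := by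
  subst hτ
  rw [ip_enc_mask, ← consistent_iff_traverse ht ℓ a]
  constructor
  · intro hcard
    have hsub : (Finset.univ.filter fun i => DTree.pathQ ℓ i = some (a i)) ⊆ dom (DTree.pathQ ℓ) := by
      intro i hi
      simp only [Finset.mem_filter] at hi
      simp [dom, hi.2]
    have heq := Finset.eq_of_subset_of_card_le hsub (le_of_eq hcard.symm)
    intro i j hq
    have : i ∈ dom (DTree.pathQ ℓ) := by simp [dom, hq]
    rw [← heq, Finset.mem_filter] at this
    rw [hq] at this
    exact (Option.some_inj.1 this.2).symm
  · intro hcons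
    congr 1
    ext i
    simp only [Finset.mem_filter, dom, Finset.mem_univ, true_and]
    constructor
    · intro h; rw [h]; simp
    · intro h
      cases hq : DTree.pathQ ℓ i with
      | none => exact absurd hq h
      | some j => rw [hcons i j hq]
end
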